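/- arXiv:2009.04981 — 2 statements merged into one kernel-verified Lean document; each statement's English description precedes it below -/
import Mathlib

section
/- (Theorem 1.) Under the partial-decision information game setup, assume additionally that each Ω_i ⊆ ℝ^{n_i} is nonempty, closed and convex with Ω = Ω₁×…×Ω_N, and that x* ∈ Ω satisfies the variational inequality ⟨F(x*), y − x*⟩ ≥ 0 for all y ∈ Ω (the Nash equilibrium condition). Suppose the step size α > 0 satisfies ρ_α = λ_max(M_α) < 1. Consider the iteration: for each agent i, x̂_i^k = Σ_{j} w_{ij} x_j^k, x_{i,i}^{k+1} = proj_{Ω_i}(x̂_{i,i}^k − (α/q_i) g_i(x̂_i^k)), and x_{i,j}^{k+1} = x̂_{i,j}^k for j ≠ i. Then for every initial condition with x_{i,i}^0 ∈ Ω_i, the iterates satisfy ‖x^k − 1_N ⊗ x*‖_𝐐 ≤ (√ρ_α)^k ‖x^0 − 1_N ⊗ x*‖_𝐐 for all k, and hence x^k converges to 1_N ⊗ x* with linear rate. -/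
open Matrix Kronecker

/-- Heterogeneous block index: `Idx n → ℝ ≃ ℝ^{n₁+…+n_N}`. -/
abbrev Idx {N : ℕ} (n : Fin N → ℕ) : Type := (i : Fin N) × Fin (n i)

/-- `P`-weighted norm `‖x‖_P = √(xᵀ P x)`. -/
noncomputable def wnorm {ι : Type*} [Fintype ι] (P : Matrix ι ι ℝ) (x : ι → ℝ) : ℝ :=
  Real.sqrt (x ⬝ᵥ P.mulVec x)

/-- Largest eigenvalue of a (hermitian) real matrix. -/
noncomputable def eigMax {m : ℕ} (A : Matrix (Fin m) (Fin m) ℝ) : ℝ :=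
  if hA : A.IsHermitian then ⨆ i, hA.eigenvalues i else 0

/-- The singular values of a real square matrix, sorted in nondecreasing order. -/
noncomputable def sortedSingVals {N : ℕ} (A : Matrix (Fin N) (Fin N) ℝ) : Fin N → ℝ :=
  fun i =>
    Real.sqrt (((Matrix.isHermitian_conjTranspose_mul_self A).eigenvalues ∘
      Tuple.sort (Matrix.isHermitian_conjTranspose_mul_self A).eigenvalues) i)

/-- `p` is the Euclidean projection of `u` onto `S ⊆ ℝ^d`. -/
def IsEuclProjOn {d : ℕ} (S : Set (Fin d → ℝ)) (u p : Fin d → ℝ) : Prop :=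
  p ∈ S ∧ ∀ z ∈ S, ∑ a, (u a - p a) ^ 2 ≤ ∑ a, (u a - z a) ^ 2

/-!
Measure the error in the `Q`-norm and split it at the `q`-weighted mean `x̄ = ∑ᵢ qᵢ xᵢ`:
`‖x - 1 ⊗ x*‖²_Q = b² + a²` with consensus error `a = ‖x̄ - x*‖` and disagreement
`b² = ‖x - 1 ⊗ x̄‖²_Q`. Mixing by `W` keeps `x̄` (as `qᵀW = qᵀ`) and contracts the disagreement by
`σ̄`: in the coordinates `Q^{1/2}`, the disagreement is orthogonal to `√q`, the singular vector
of `Q^{1/2} W Q^{-1/2}` for the singular value `1`. The projected step is nonexpansive and, by the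
variational inequality, fixes `x*`; strong monotonicity at `x̄` and Lipschitz continuity for the
deviations from `1 ⊗ x̄` then bound the new squared error by `(a, b) M_α (a, b)ᵀ ≤ ρ_α (a² + b²)`.
-/

lemma wnorm_diagonal_kronecker_one {κ ι : Type*} [Fintype κ] [Fintype ι] [DecidableEq κ]
    [DecidableEq ι] (q : κ → ℝ) (v : κ × ι → ℝ) :
    wnorm (diagonal q ⊗ₖ (1 : Matrix ι ι ℝ)) v = √(∑ i, q i * ∑ p, v (i, p) ^ 2) := by
  unfold wnorm
  congr 1
  simp only [dotProduct, mulVec, kroneckerMap_apply, diagonal_apply, one_apply, mul_ite, mul_one,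
    mul_zero, ite_mul, zero_mul, Fintype.sum_prod_type, Finset.sum_ite_eq, Finset.mem_univ,
    if_true, sq, Finset.mul_sum]
  exact Finset.sum_congr rfl fun i _ => Finset.sum_congr rfl fun p _ => by ring

section LinearAlgebra

variable {ι : Type*} [Fintype ι] [DecidableEq ι] {A : Matrix ι ι ℝ}

namespace Matrix.IsHermitian

lemma dotProduct_eq_sum_eigenvectorBasis (hA : A.IsHermitian) (x y : ι → ℝ) :
    x ⬝ᵥ y = ∑ i, (⇑(hA.eigenvectorBasis i) ⬝ᵥ x) * (⇑(hA.eigenvectorBasis i) ⬝ᵥ y) := by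
  have h := hA.eigenvectorBasis.sum_inner_mul_inner (WithLp.toLp 2 x) (WithLp.toLp 2 y)
  simp only [EuclideanSpace.inner_eq_star_dotProduct, star_trivial, dotProduct_comm y] at h
  exact h.symm

lemma eigenvectorBasis_dotProduct_mulVec (hA : A.IsHermitian) (x : ι → ℝ) (i : ι) :
    ⇑(hA.eigenvectorBasis i) ⬝ᵥ (A *ᵥ x) = hA.eigenvalues i * (⇑(hA.eigenvectorBasis i) ⬝ᵥ x) := by
  have hAt : Aᵀ = A := by simpa [conjTranspose_eq_transpose_of_trivial] using hA.eq
  rw [dotProduct_mulVec, ← mulVec_transpose, hAt, hA.mulVec_eigenvectorBasis, smul_dotProduct,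
    smul_eq_mul]

lemma dotProduct_mulVec_eq_sum_eigenvalues (hA : A.IsHermitian) (x : ι → ℝ) :
    x ⬝ᵥ (A *ᵥ x) = ∑ i, hA.eigenvalues i * (⇑(hA.eigenvectorBasis i) ⬝ᵥ x) ^ 2 := by
  simp only [hA.dotProduct_eq_sum_eigenvectorBasis x, hA.eigenvectorBasis_dotProduct_mulVec]
  exact Finset.sum_congr rfl fun i _ => by ring

lemma dotProduct_self_eq_sum_sq (hA : A.IsHermitian) (x : ι → ℝ) :
    x ⬝ᵥ x = ∑ i, (⇑(hA.eigenvectorBasis i) ⬝ᵥ x) ^ 2 := by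
  simp only [hA.dotProduct_eq_sum_eigenvectorBasis x x, sq]

end Matrix.IsHermitian

lemma dotProduct_mulVec_le_eigMax {m : ℕ} {A : Matrix (Fin m) (Fin m) ℝ} (hA : A.IsHermitian)
    (x : Fin m → ℝ) : x ⬝ᵥ (A *ᵥ x) ≤ eigMax A * (x ⬝ᵥ x) := by
  rw [eigMax, dif_pos hA, hA.dotProduct_mulVec_eq_sum_eigenvalues, hA.dotProduct_self_eq_sum_sq,
    Finset.mul_sum]
  exact Finset.sum_le_sum fun i _ => mul_le_mul_of_nonneg_right
    (le_ciSup (Set.finite_range _).bddAbove i) (sq_nonneg _)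

lemma quadForm_le_eigMax_fin_two (a b c x y : ℝ) :
    a * x ^ 2 + 2 * b * x * y + c * y ^ 2 ≤ eigMax !![a, b; b, c] * (x ^ 2 + y ^ 2) := by
  have hM : (!![a, b; b, c]).IsHermitian := by
    ext i j
    fin_cases i <;> fin_cases j <;> rfl
  have h := dotProduct_mulVec_le_eigMax hM ![x, y]
  simp only [dotProduct, mulVec, Fin.sum_univ_two, Matrix.cons_val_zero, Matrix.cons_val_one,
    Matrix.of_apply, Matrix.cons_val', Matrix.empty_val', Matrix.cons_val_fin_one] at h
  linarith

lemma sq_le_of_forall_quadForm_le {A B α ℓbar σ ρ : ℝ} (hα : 0 ≤ α) (hℓbar : 0 ≤ ℓbar)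
    (hquad : ∀ a b : ℝ, A * a ^ 2 + 2 * B * a * b
      + (1 + 2 * α * ℓbar + α ^ 2 * ℓbar ^ 2) * σ ^ 2 * b ^ 2 ≤ ρ * (a ^ 2 + b ^ 2)) :
    σ ^ 2 ≤ ρ := by
  have h := hquad 0 1
  norm_num at h
  nlinarith [mul_nonneg (mul_nonneg hα hℓbar) (sq_nonneg σ),
    mul_nonneg (sq_nonneg (α * ℓbar)) (sq_nonneg σ)]

lemma Tuple.le_comp_sort_of_ne {m : ℕ} (hm : 2 ≤ m) (f : Fin m → ℝ) {i : Fin m}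
    (hi : i ≠ Tuple.sort f ⟨m - 1, by omega⟩) : f i ≤ (f ∘ Tuple.sort f) ⟨m - 2, by omega⟩ := by
  obtain ⟨j, rfl⟩ := (Tuple.sort f).surjective i
  have hj : j ≤ ⟨m - 2, by omega⟩ := by
    have := j.isLt
    have : (j : ℕ) ≠ m - 1 := fun h => hi (congrArg _ (Fin.ext h))
    change (j : ℕ) ≤ m - 2
    omega
  exact Tuple.monotone_sort f hj

lemma sq_sortedSingVals {m : ℕ} (B : Matrix (Fin m) (Fin m) ℝ) (k : Fin m) :
    sortedSingVals B k ^ 2 = ((isHermitian_conjTranspose_mul_self B).eigenvalues ∘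
      Tuple.sort (isHermitian_conjTranspose_mul_self B).eigenvalues) k :=
  Real.sq_sqrt (eigenvalues_conjTranspose_mul_self_nonneg B _)

lemma mulVec_dotProduct_self_le_of_dotProduct_eq_zero {m : ℕ} (hm : 2 ≤ m)
    {B : Matrix (Fin m) (Fin m) ℝ} {w : Fin m → ℝ} (hw : w ≠ 0) (hBw : B *ᵥ w = w)
    (hBtw : Bᵀ *ᵥ w = w) (hσ : sortedSingVals B ⟨m - 2, by omega⟩ < 1) {z : Fin m → ℝ}
    (hz : w ⬝ᵥ z = 0) :
    (B *ᵥ z) ⬝ᵥ (B *ᵥ z) ≤ sortedSingVals B ⟨m - 2, by omega⟩ ^ 2 * (z ⬝ᵥ z) := by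
  set hA := isHermitian_conjTranspose_mul_self B
  set e := hA.eigenvectorBasis
  set T := Tuple.sort hA.eigenvalues ⟨m - 1, by omega⟩
  have hBt : Bᴴ = Bᵀ := conjTranspose_eq_transpose_of_trivial B
  have hBB (x : Fin m → ℝ) : (B *ᵥ x) ⬝ᵥ (B *ᵥ x) = x ⬝ᵥ ((Bᴴ * B) *ᵥ x) := by
    rw [← mulVec_mulVec, hBt, dotProduct_mulVec x, vecMul_transpose]
  have hσ0 : 0 ≤ sortedSingVals B ⟨m - 2, by omega⟩ := Real.sqrt_nonneg _
  have hle (i : Fin m) (hi : i ≠ T) : hA.eigenvalues i ≤ sortedSingVals B ⟨m - 2, by omega⟩ ^ 2 :=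
    sq_sortedSingVals B _ ▸ Tuple.le_comp_sort_of_ne hm _ hi
  have hAw : (Bᴴ * B) *ᵥ w = w := by rw [← mulVec_mulVec, hBw, hBt, hBtw]
  -- `w` is an eigenvector of `BᴴB` for the eigenvalue `1`, which exceeds every eigenvalue but
  -- the top one; so `w` lies in the top eigendirection and `z ⊥ w` has no component there
  have hwi (i : Fin m) (hi : i ≠ T) : ⇑(e i) ⬝ᵥ w = 0 := by
    have h := hA.eigenvectorBasis_dotProduct_mulVec w i
    rw [hAw] at h
    have : hA.eigenvalues i < 1 := (hle i hi).trans_lt (by nlinarith)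
    nlinarith [mul_self_nonneg (⇑(e i) ⬝ᵥ w)]
  have hwT : ⇑(e T) ⬝ᵥ w ≠ 0 := by
    intro h
    apply hw
    rw [← dotProduct_self_eq_zero, hA.dotProduct_self_eq_sum_sq]
    refine Finset.sum_eq_zero fun i _ => ?_
    by_cases hi : i = T
    · rw [hi, h, sq, mul_zero]
    · rw [hwi i hi, sq, mul_zero]
  have hzT : ⇑(e T) ⬝ᵥ z = 0 := by
    rw [hA.dotProduct_eq_sum_eigenvectorBasis, Finset.sum_eq_single T
      (fun i _ hi => by rw [hwi i hi, zero_mul]) (by simp)] at hz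
    exact (mul_eq_zero.mp hz).resolve_left hwT
  rw [hBB, hA.dotProduct_mulVec_eq_sum_eigenvalues, hA.dotProduct_self_eq_sum_sq, Finset.mul_sum]
  refine Finset.sum_le_sum fun i _ => ?_
  by_cases hi : i = T
  · rw [hi, hzT]
    simp
  · exact mul_le_mul_of_nonneg_right (hle i hi) (sq_nonneg _)

lemma sum_mul_mulVec_sq_le {N : ℕ} (hN : 2 ≤ N) {W : Matrix (Fin N) (Fin N) ℝ} {q : Fin N → ℝ}
    (hqpos : ∀ i, 0 < q i) (hqW : q ᵥ* W = q) (hWrow : ∀ i, ∑ j, W i j = 1)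
    (hσ : sortedSingVals (diagonal (fun i => √(q i)) * W * diagonal (fun i => (√(q i))⁻¹))
      ⟨N - 2, by omega⟩ < 1)
    {v : Fin N → ℝ} (hv : ∑ i, q i * v i = 0) :
    ∑ i, q i * (W *ᵥ v) i ^ 2 ≤
      sortedSingVals (diagonal (fun i => √(q i)) * W * diagonal (fun i => (√(q i))⁻¹))
        ⟨N - 2, by omega⟩ ^ 2 * ∑ i, q i * v i ^ 2 := by
  set s : Fin N → ℝ := fun i => √(q i)
  have hs (i : Fin N) : s i * s i = q i := Real.mul_self_sqrt (hqpos i).le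
  have hs0 (i : Fin N) : s i ≠ 0 := (Real.sqrt_pos.2 (hqpos i)).ne'
  have hB (v : Fin N → ℝ) : (diagonal s * W * diagonal (fun i => (s i)⁻¹)) *ᵥ (s * v) =
      s * (W *ᵥ v) := by
    have : diagonal (fun i => (s i)⁻¹) *ᵥ (s * v) = v := by
      ext i
      simp [mulVec_diagonal, hs0]
    rw [← mulVec_mulVec, ← mulVec_mulVec, this]
    ext i
    simp [mulVec_diagonal]
  have hsq (u : Fin N → ℝ) : (s * u) ⬝ᵥ (s * u) = ∑ i, q i * u i ^ 2 :=
    Finset.sum_congr rfl fun i _ => by simp only [Pi.mul_apply, ← hs i]; ring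
  have hBs : (diagonal s * W * diagonal (fun i => (s i)⁻¹)) *ᵥ s = s := by
    have hW1 : W *ᵥ 1 = 1 := by
      ext i
      simp [mulVec, dotProduct, hWrow]
    simpa [hW1] using hB 1
  have hBts : (diagonal s * W * diagonal (fun i => (s i)⁻¹))ᵀ *ᵥ s = s := by
    rw [transpose_mul, transpose_mul, diagonal_transpose, diagonal_transpose, ← mulVec_mulVec,
      ← mulVec_mulVec, mulVec_transpose]
    have hq : diagonal s *ᵥ s = q := by
      ext j
      simp [mulVec_diagonal, hs]
    ext i
    rw [hq, hqW, mulVec_diagonal, ← hs i, inv_mul_cancel_left₀ (hs0 i)]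
  have hs_ne : s ≠ 0 := fun h => hs0 ⟨0, by omega⟩ (congrFun h _)
  have hsv : s ⬝ᵥ (s * v) = 0 := by
    rw [← hv]
    exact Finset.sum_congr rfl fun i _ => by simp only [Pi.mul_apply, ← hs i]; ring
  have h := mulVec_dotProduct_self_le_of_dotProduct_eq_zero hN hs_ne hBs hBts hσ hsv
  rwa [hB, hsq, hsq] at h

end LinearAlgebra

section Projection

open WithLp

variable {F : Type*} [NormedAddCommGroup F] [InnerProductSpace ℝ F]

lemma norm_sub_le_of_forall_inner_le_zero {K : Set F} {u v p r : F} (hp : p ∈ K) (hr : r ∈ K)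
    (hu : ∀ z ∈ K, inner ℝ (u - p) (z - p) ≤ 0) (hv : ∀ z ∈ K, inner ℝ (v - r) (z - r) ≤ 0) :
    ‖p - r‖ ≤ ‖u - v‖ := by
  have hpr : ‖p - r‖ ^ 2 ≤ inner ℝ (u - v) (p - r) := by
    have h := add_nonpos (hu r hr) (hv p hp)
    have e : inner ℝ (u - v) (p - r) - ‖p - r‖ ^ 2 =
        -(inner ℝ (u - p) (r - p) + inner ℝ (v - r) (p - r)) := by
      rw [← real_inner_self_eq_norm_sq]
      simp only [inner_sub_left, inner_sub_right, real_inner_comm]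
      ring
    linarith
  have h := hpr.trans (real_inner_le_norm _ _)
  rcases (norm_nonneg (p - r)).eq_or_lt with h0 | h0
  · rw [← h0]
    exact norm_nonneg _
  · nlinarith

lemma norm_toLp_sub_toLp_sq {d : ℕ} (x y : Fin d → ℝ) :
    ‖toLp 2 x - toLp 2 y‖ ^ 2 = ∑ a, (x a - y a) ^ 2 := by
  simp [EuclideanSpace.norm_sq_eq]

lemma inner_toLp_toLp_eq_sum {d : ℕ} (x y : Fin d → ℝ) :
    inner ℝ (toLp 2 x) (toLp 2 y) = ∑ a, x a * y a := by
  simp [EuclideanSpace.inner_eq_star_dotProduct, dotProduct, mul_comm]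

lemma IsEuclProjOn.sum_mul_le_zero {d : ℕ} {S : Set (Fin d → ℝ)} (hS : Convex ℝ S)
    {u p : Fin d → ℝ} (h : IsEuclProjOn S u p) {z : Fin d → ℝ} (hz : z ∈ S) :
    ∑ a, (u a - p a) * (z a - p a) ≤ 0 := by
  set K : Set (EuclideanSpace ℝ (Fin d)) := ofLp ⁻¹' S
  have hK : Convex ℝ K := hS.linear_preimage (WithLp.linearEquiv 2 ℝ (Fin d → ℝ)).toLinearMap
  have hmin : ‖toLp 2 u - toLp 2 p‖ = ⨅ w : K, ‖toLp 2 u - w‖ := by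
    have : Nonempty K := ⟨⟨_, h.1⟩⟩
    have hbdd : BddBelow (Set.range fun w : K => ‖toLp 2 u - w‖) :=
      ⟨0, Set.forall_mem_range.2 fun _ => norm_nonneg _⟩
    refine le_antisymm (le_ciInf fun w => ?_) (ciInf_le hbdd (⟨toLp 2 p, h.1⟩ : K))
    rw [← pow_le_pow_iff_left₀ (norm_nonneg _) (norm_nonneg _) two_ne_zero,
      ← toLp_ofLp (p := 2) (w : EuclideanSpace ℝ (Fin d)), norm_toLp_sub_toLp_sq,
      norm_toLp_sub_toLp_sq]
    exact h.2 _ w.2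
  have := (norm_eq_iInf_iff_real_inner_le_zero hK h.1).1 hmin (toLp 2 z) hz
  rwa [← toLp_sub, ← toLp_sub, inner_toLp_toLp_eq_sum] at this

lemma IsEuclProjOn.sum_sq_sub_le {d : ℕ} {S : Set (Fin d → ℝ)} (hS : Convex ℝ S)
    {u v p r : Fin d → ℝ} (hp : IsEuclProjOn S u p) (hr : r ∈ S)
    (hv : ∀ z ∈ S, ∑ a, (v a - r a) * (z a - r a) ≤ 0) :
    ∑ a, (p a - r a) ^ 2 ≤ ∑ a, (u a - v a) ^ 2 := by
  have hpK (z : EuclideanSpace ℝ (Fin d)) (hz : ofLp z ∈ S) :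
      inner ℝ (toLp 2 u - toLp 2 p) (z - toLp 2 p) ≤ 0 := by
    rw [← toLp_ofLp (p := 2) z, ← toLp_sub, ← toLp_sub, inner_toLp_toLp_eq_sum]
    exact hp.sum_mul_le_zero hS hz
  have hrK (z : EuclideanSpace ℝ (Fin d)) (hz : ofLp z ∈ S) :
      inner ℝ (toLp 2 v - toLp 2 r) (z - toLp 2 r) ≤ 0 := by
    rw [← toLp_ofLp (p := 2) z, ← toLp_sub, ← toLp_sub, inner_toLp_toLp_eq_sum]
    exact hv _ hz
  have h := norm_sub_le_of_forall_inner_le_zero (K := ofLp ⁻¹' S) hp.1 hr hpK hrK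
  rw [← norm_toLp_sub_toLp_sq, ← norm_toLp_sub_toLp_sq]
  exact pow_le_pow_left₀ (norm_nonneg _) h 2

end Projection

lemma abs_sum_mul_le_of_sum_sq_le {ι : Type*} {s : Finset ι} {f h : ι → ℝ} {c A B : ℝ}
    (hA : 0 ≤ A) (hB : 0 ≤ B) (hf : ∑ i ∈ s, f i ^ 2 ≤ c * A ^ 2)
    (hh : c * ∑ i ∈ s, h i ^ 2 ≤ B ^ 2) : |∑ i ∈ s, f i * h i| ≤ A * B := by
  have hh0 : 0 ≤ ∑ i ∈ s, h i ^ 2 := Finset.sum_nonneg fun i _ => sq_nonneg _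
  refine abs_le_of_sq_le_sq ?_ (mul_nonneg hA hB)
  calc (∑ i ∈ s, f i * h i) ^ 2 ≤ (c * A ^ 2) * ∑ i ∈ s, h i ^ 2 :=
        (Finset.sum_mul_sq_le_sq_mul_sq s f h).trans (mul_le_mul_of_nonneg_right hf hh0)
    _ = A ^ 2 * (c * ∑ i ∈ s, h i ^ 2) := by ring
    _ ≤ A ^ 2 * B ^ 2 := mul_le_mul_of_nonneg_left hh (sq_nonneg A)
    _ = (A * B) ^ 2 := by ring

lemma sq_mul_le_mul_div_sq {ℓ qmin S X : ℝ} (hqmin0 : 0 < qmin) (h : qmin * S ≤ X ^ 2) :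
    ℓ ^ 2 * S ≤ qmin * (ℓ / qmin * X) ^ 2 := by
  rw [show qmin * (ℓ / qmin * X) ^ 2 = ℓ ^ 2 * (X ^ 2 / qmin) by field_simp]
  gcongr
  rwa [le_div_iff₀ hqmin0, mul_comm]

section SumsOfSquares

variable {κ ι : Type*} [Fintype κ] [Fintype ι]

/-- `‖y - 1 ⊗ c‖²_Q` for `Q = diag q`. -/
def weightedSqDist (q : κ → ℝ) (y : κ → ι → ℝ) (c : ι → ℝ) : ℝ :=
  ∑ i, q i * ∑ p, (y i p - c p) ^ 2

lemma weightedSqDist_eq_sum_sum (q : κ → ℝ) (y : κ → ι → ℝ) (c : ι → ℝ) :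
    weightedSqDist q y c = ∑ p, ∑ i, q i * (y i p - c p) ^ 2 := by
  simp only [weightedSqDist, Finset.mul_sum]
  exact Finset.sum_comm

lemma weightedSqDist_nonneg {q : κ → ℝ} (hq : ∀ i, 0 ≤ q i) (y : κ → ι → ℝ) (c : ι → ℝ) :
    0 ≤ weightedSqDist q y c :=
  Finset.sum_nonneg fun i _ => mul_nonneg (hq i) (Finset.sum_nonneg fun _ _ => sq_nonneg _)

lemma mul_sum_sum_sq_le_weightedSqDist {q : κ → ℝ} {qmin : ℝ} (hqmin : ∀ i, qmin ≤ q i)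
    (y : κ → ι → ℝ) (c : ι → ℝ) :
    qmin * ∑ i, ∑ p, (y i p - c p) ^ 2 ≤ weightedSqDist q y c := by
  rw [Finset.mul_sum]
  exact Finset.sum_le_sum fun i _ =>
    mul_le_mul_of_nonneg_right (hqmin i) (Finset.sum_nonneg fun _ _ => sq_nonneg _)

lemma weightedSqDist_eq_add {q : κ → ℝ} (hq : ∑ i, q i = 1) {y : κ → ι → ℝ} {m : ι → ℝ}
    (hm : ∀ p, ∑ i, q i * y i p = m p) (c : ι → ℝ) :
    weightedSqDist q y c = weightedSqDist q y m + ∑ p, (m p - c p) ^ 2 := by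
  have key (p : ι) : ∑ i, q i * (y i p - c p) ^ 2 =
      ∑ i, q i * (y i p - m p) ^ 2 + (m p - c p) ^ 2 := by
    have e (i : κ) : q i * (y i p - c p) ^ 2 = q i * (y i p - m p) ^ 2 +
        2 * (m p - c p) * (q i * y i p) + (c p ^ 2 - m p ^ 2) * q i := by ring
    rw [Finset.sum_congr rfl fun i _ => e i, Finset.sum_add_distrib, Finset.sum_add_distrib,
      ← Finset.mul_sum, ← Finset.mul_sum, hm, hq]
    ring
  rw [weightedSqDist_eq_sum_sum, weightedSqDist_eq_sum_sum, ← Finset.sum_add_distrib]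
  exact Finset.sum_congr rfl fun p _ => key p

end SumsOfSquares

section Mixing

variable {N : ℕ} {W : Matrix (Fin N) (Fin N) ℝ} {q : Fin N → ℝ}

lemma sum_mul_mulVec_eq (hqW : q ᵥ* W = q) (v : Fin N → ℝ) :
    ∑ i, q i * (W *ᵥ v) i = ∑ i, q i * v i := by
  have h := dotProduct_mulVec q W v
  rwa [hqW] at h

variable {ι : Type*} [Fintype ι]

lemma weightedSqDist_mix_le (hqsum : ∑ i, q i = 1) (hWrow : ∀ i, ∑ j, W i j = 1) {σ : ℝ}
    (hmix : ∀ v : Fin N → ℝ, ∑ i, q i * v i = 0 →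
      ∑ i, q i * (W *ᵥ v) i ^ 2 ≤ σ ^ 2 * ∑ i, q i * v i ^ 2)
    (x : Fin N → ι → ℝ) :
    weightedSqDist q (fun i p => ∑ j, W i j * x j p) (fun p => ∑ i, q i * x i p) ≤
      σ ^ 2 * weightedSqDist q x (fun p => ∑ i, q i * x i p) := by
  have hcol (p : ι) := hmix (fun i => x i p - ∑ j, q j * x j p) (by
    simp only [mul_sub, Finset.sum_sub_distrib, ← Finset.sum_mul, hqsum, one_mul, sub_self])
  have hWv (p : ι) (i : Fin N) : (W *ᵥ fun i => x i p - ∑ j, q j * x j p) i =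
      ∑ j, W i j * x j p - ∑ j, q j * x j p := by
    simp only [mulVec, dotProduct, mul_sub, Finset.sum_sub_distrib, ← Finset.sum_mul, hWrow,
      one_mul]
  simp only [hWv] at hcol
  rw [weightedSqDist_eq_sum_sum, weightedSqDist_eq_sum_sum, Finset.mul_sum]
  exact Finset.sum_le_sum fun p _ => hcol p

end Mixing

section Game

variable {N : ℕ} {n : Fin N → ℕ}

lemma sum_sub_sum_block_eq {f f' : Idx n → ℝ} {i : Fin N}
    (h : ∀ p : Idx n, p.1 ≠ i → f p = f' p) :
    ∑ p, f p - ∑ a, f ⟨i, a⟩ = ∑ p, f' p - ∑ a, f' ⟨i, a⟩ := by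
  simp only [Fintype.sum_sigma]
  rw [← Finset.add_sum_erase _ _ (Finset.mem_univ i),
    ← Finset.add_sum_erase _ _ (Finset.mem_univ i),
    Finset.sum_congr rfl fun j hj => Finset.sum_congr rfl fun a _ =>
      h ⟨j, a⟩ (Finset.ne_of_mem_erase hj)]
  ring

lemma sum_block_mul_sub_nonneg {Ω : (i : Fin N) → Set (Fin (n i) → ℝ)} {G c : Idx n → ℝ}
    (hc : ∀ i, (fun a => c ⟨i, a⟩) ∈ Ω i)
    (hG : ∀ y : Idx n → ℝ, (∀ i, (fun a => y ⟨i, a⟩) ∈ Ω i) → 0 ≤ ∑ p, G p * (y p - c p))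
    (i : Fin N) {z : Fin (n i) → ℝ} (hz : z ∈ Ω i) :
    0 ≤ ∑ a, G ⟨i, a⟩ * (z a - c ⟨i, a⟩) := by
  set y : Idx n → ℝ := fun p =>
    Function.update (fun j a => c ⟨j, a⟩ : (j : Fin N) → Fin (n j) → ℝ) i z p.1 p.2
  have hy (j : Fin N) : (fun a => y ⟨j, a⟩) = Function.update (fun j a => c ⟨j, a⟩) i z j := rfl
  have hyΩ (j : Fin N) : (fun a => y ⟨j, a⟩) ∈ Ω j := by
    rcases eq_or_ne j i with rfl | hj
    · rwa [hy, Function.update_self]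
    · rw [hy, Function.update_of_ne hj]
      exact hc j
  have h := hG y hyΩ
  rw [Fintype.sum_sigma, Finset.sum_eq_single i (fun j _ hj => ?_) (by simp)] at h
  · simpa [y] using h
  · simp [y, Function.update_of_ne hj]

lemma sum_sq_sub_le_of_isEuclProjOn {i : Fin N} {S : Set (Fin (n i) → ℝ)} (hS : Convex ℝ S)
    {v y c : Idx n → ℝ} {d e : Fin (n i) → ℝ} (hoff : ∀ p : Idx n, p.1 ≠ i → y p = v p)
    (hproj : IsEuclProjOn S (fun a => v ⟨i, a⟩ - d a) (fun a => y ⟨i, a⟩))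
    (hc : (fun a => c ⟨i, a⟩) ∈ S) (he : ∀ z ∈ S, 0 ≤ ∑ a, e a * (z a - c ⟨i, a⟩)) :
    ∑ p, (y p - c p) ^ 2 ≤ ∑ p, (v p - c p) ^ 2
      - 2 * ∑ a, (d a - e a) * (v ⟨i, a⟩ - c ⟨i, a⟩) + ∑ a, (d a - e a) ^ 2 := by
  have hblock := hproj.sum_sq_sub_le hS (v := fun a => c ⟨i, a⟩ - e a) hc fun z hz => by
    have h := he z hz
    simp only [sub_sub_cancel_left, neg_mul, Finset.sum_neg_distrib]
    linarith
  have hsplit := sum_sub_sum_block_eq (f := fun p => (y p - c p) ^ 2)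
    (f' := fun p => (v p - c p) ^ 2) fun p hp => by rw [hoff p hp]
  have hexp : ∑ a, (v ⟨i, a⟩ - d a - (c ⟨i, a⟩ - e a)) ^ 2 = ∑ a, (v ⟨i, a⟩ - c ⟨i, a⟩) ^ 2
      - 2 * ∑ a, (d a - e a) * (v ⟨i, a⟩ - c ⟨i, a⟩) + ∑ a, (d a - e a) ^ 2 := by
    simp only [Finset.mul_sum, ← Finset.sum_sub_distrib, ← Finset.sum_add_distrib]
    exact Finset.sum_congr rfl fun a _ => by ring
  linarith

lemma weightedSqDist_le_of_isEuclProjOn {q : Fin N → ℝ} (hq : ∀ i, 0 < q i) {qmin : ℝ}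
    (hqmin0 : 0 < qmin) (hqmin : ∀ i, qmin ≤ q i) {Ω : (i : Fin N) → Set (Fin (n i) → ℝ)}
    (hΩ : ∀ i, Convex ℝ (Ω i)) {g : (i : Fin N) → (Idx n → ℝ) → (Fin (n i) → ℝ)}
    {xstar : Idx n → ℝ} (hxstar : ∀ i, (fun a => xstar ⟨i, a⟩) ∈ Ω i)
    (hVI : ∀ i, ∀ z ∈ Ω i, 0 ≤ ∑ a, g i xstar a * (z a - xstar ⟨i, a⟩)) {α : ℝ} (hα : 0 ≤ α)
    {u x : Fin N → Idx n → ℝ} (hoff : ∀ i (p : Idx n), p.1 ≠ i → x i p = u i p)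
    (hproj : ∀ i, IsEuclProjOn (Ω i) (fun a => u i ⟨i, a⟩ - (α / q i) * g i (u i) a)
      (fun a => x i ⟨i, a⟩)) :
    weightedSqDist q x xstar ≤ weightedSqDist q u xstar
      - 2 * α * ∑ p : Idx n, (g p.1 (u p.1) p.2 - g p.1 xstar p.2) * (u p.1 p - xstar p)
      + α ^ 2 / qmin * ∑ p : Idx n, (g p.1 (u p.1) p.2 - g p.1 xstar p.2) ^ 2 := by
  have hagent (i : Fin N) : q i * ∑ p, (x i p - xstar p) ^ 2 ≤ q i * ∑ p, (u i p - xstar p) ^ 2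
      - 2 * α * ∑ a, (g i (u i) a - g i xstar a) * (u i ⟨i, a⟩ - xstar ⟨i, a⟩)
      + α ^ 2 / qmin * ∑ a, (g i (u i) a - g i xstar a) ^ 2 := by
    have h := sum_sq_sub_le_of_isEuclProjOn (hΩ i) (hoff i) (hproj i) (hxstar i)
      (e := fun a => α / q i * g i xstar a) fun z hz => by
        simpa only [mul_assoc, ← Finset.mul_sum] using
          mul_nonneg (div_nonneg hα (hq i).le) (hVI i z hz)
    simp only [← mul_sub, mul_pow, mul_assoc, ← Finset.mul_sum] at h
    set G := ∑ a, (g i (u i) a - g i xstar a) * (u i ⟨i, a⟩ - xstar ⟨i, a⟩)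
    calc q i * ∑ p, (x i p - xstar p) ^ 2
        ≤ q i * (∑ p, (u i p - xstar p) ^ 2 - 2 * (α / q i * G)
          + (α / q i) ^ 2 * ∑ a, (g i (u i) a - g i xstar a) ^ 2) :=
          mul_le_mul_of_nonneg_left h (hq i).le
      _ = q i * ∑ p, (u i p - xstar p) ^ 2 - 2 * α * G
          + α ^ 2 / q i * ∑ a, (g i (u i) a - g i xstar a) ^ 2 := by
          field_simp [(hq i).ne']
      _ ≤ _ := by gcongr; exact hqmin i
  calc weightedSqDist q x xstar ≤ ∑ i, (q i * ∑ p, (u i p - xstar p) ^ 2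
        - 2 * α * ∑ a, (g i (u i) a - g i xstar a) * (u i ⟨i, a⟩ - xstar ⟨i, a⟩)
        + α ^ 2 / qmin * ∑ a, (g i (u i) a - g i xstar a) ^ 2) :=
        Finset.sum_le_sum fun i _ => hagent i
    _ = _ := by
      simp only [Finset.sum_add_distrib, Finset.sum_sub_distrib, ← Finset.mul_sum,
        weightedSqDist, Fintype.sum_sigma]

lemma sum_sq_diag_le (y : Fin N → Idx n → ℝ) (c : Idx n → ℝ) :
    ∑ p : Idx n, (y p.1 p - c p) ^ 2 ≤ ∑ i, ∑ p, (y i p - c p) ^ 2 := by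
  rw [Fintype.sum_sigma]
  refine Finset.sum_le_sum fun i _ => ?_
  rw [Fintype.sum_sigma (fun p => (y i p - c p) ^ 2)]
  exact Finset.single_le_sum (f := fun j => ∑ a, (y i ⟨j, a⟩ - c ⟨j, a⟩) ^ 2)
    (fun j _ => Finset.sum_nonneg fun a _ => sq_nonneg _) (Finset.mem_univ i)

lemma mul_sum_sq_diag_le_weightedSqDist {q : Fin N → ℝ} {qmin : ℝ} (hqmin0 : 0 < qmin)
    (hqmin : ∀ i, qmin ≤ q i) (y : Fin N → Idx n → ℝ) (c : Idx n → ℝ) :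
    qmin * ∑ p : Idx n, (y p.1 p - c p) ^ 2 ≤ weightedSqDist q y c :=
  (mul_le_mul_of_nonneg_left (sum_sq_diag_le y c) hqmin0.le).trans
    (mul_sum_sum_sq_le_weightedSqDist hqmin y c)

variable {g : (i : Fin N) → (Idx n → ℝ) → (Fin (n i) → ℝ)} {ℓ : ℝ}

lemma sum_sq_sub_le_of_sqrt_le
    (hlip : ∀ x y : Fin N → Idx n → ℝ,
      √(∑ p : Idx n, (g p.1 (x p.1) p.2 - g p.1 (y p.1) p.2) ^ 2) ≤
        ℓ * √(∑ i, ∑ p : Idx n, (x i p - y i p) ^ 2))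
    (x y : Fin N → Idx n → ℝ) :
    ∑ p : Idx n, (g p.1 (x p.1) p.2 - g p.1 (y p.1) p.2) ^ 2 ≤
      ℓ ^ 2 * ∑ i, ∑ p : Idx n, (x i p - y i p) ^ 2 := by
  have h := pow_le_pow_left₀ (Real.sqrt_nonneg _) (hlip x y) 2
  rwa [mul_pow, Real.sq_sqrt (Finset.sum_nonneg fun _ _ => sq_nonneg _),
    Real.sq_sqrt (Finset.sum_nonneg fun _ _ => Finset.sum_nonneg fun _ _ => sq_nonneg _)] at h

section Bounds

variable {q : Fin N → ℝ} {qmin : ℝ} (hqmin0 : 0 < qmin) (hqmin : ∀ i, qmin ≤ q i)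
  (hlip : ∀ x y : Fin N → Idx n → ℝ,
    ∑ p : Idx n, (g p.1 (x p.1) p.2 - g p.1 (y p.1) p.2) ^ 2 ≤
      ℓ ^ 2 * ∑ i, ∑ p : Idx n, (x i p - y i p) ^ 2)
include hqmin0 hqmin hlip

lemma sum_sq_pseudoGrad_sub_le (u : Fin N → Idx n → ℝ) (c : Idx n → ℝ) :
    ∑ p : Idx n, (g p.1 (u p.1) p.2 - g p.1 c p.2) ^ 2 ≤
      ℓ ^ 2 / qmin * weightedSqDist q u c := by
  have h := mul_sum_sum_sq_le_weightedSqDist hqmin u c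
  calc _ ≤ ℓ ^ 2 * ∑ i, ∑ p : Idx n, (u i p - c p) ^ 2 := hlip u fun _ => c
    _ ≤ ℓ ^ 2 * (weightedSqDist q u c / qmin) := by
        gcongr
        rwa [le_div_iff₀ hqmin0, mul_comm]
    _ = _ := by ring

lemma abs_sum_pseudoGrad_sub_mul_le (hℓ : 0 ≤ ℓ) {u : Fin N → Idx n → ℝ} {m c : Idx n → ℝ}
    {B D : ℝ} (hB0 : 0 ≤ B) (hD0 : 0 ≤ D) (hB : weightedSqDist q u m ≤ B ^ 2)
    (hD : weightedSqDist q u c ≤ D ^ 2) :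
    |∑ p : Idx n, (g p.1 (u p.1) p.2 - g p.1 m p.2) * (u p.1 p - c p)| ≤ ℓ / qmin * B * D := by
  refine abs_sum_mul_le_of_sum_sq_le (c := qmin) (by positivity) hD0 ?_
    ((mul_sum_sq_diag_le_weightedSqDist hqmin0 hqmin u c).trans hD)
  exact (hlip u fun _ => m).trans <| sq_mul_le_mul_div_sq hqmin0
    ((mul_sum_sum_sq_le_weightedSqDist hqmin u m).trans hB)

lemma abs_sum_pseudoGrad_mean_sub_mul_le (hℓ : 0 ≤ ℓ) (hNq : N * qmin ≤ 1)
    {u : Fin N → Idx n → ℝ} {m c : Idx n → ℝ} {a B : ℝ} (ha0 : 0 ≤ a) (hB0 : 0 ≤ B)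
    (ha : ∑ p, (m p - c p) ^ 2 = a ^ 2) (hB : weightedSqDist q u m ≤ B ^ 2) :
    |∑ p : Idx n, (g p.1 m p.2 - g p.1 c p.2) * (u p.1 p - m p)| ≤ ℓ / qmin * a * B := by
  refine abs_sum_mul_le_of_sum_sq_le (c := qmin) (by positivity) hB0 ?_
    ((mul_sum_sq_diag_le_weightedSqDist hqmin0 hqmin u m).trans hB)
  refine (hlip (fun _ => m) fun _ => c).trans <| sq_mul_le_mul_div_sq hqmin0 ?_
  simp only [Finset.sum_const, Finset.card_univ, Fintype.card_fin, nsmul_eq_mul, ha]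
  nlinarith [sq_nonneg a]

lemma sub_le_sum_pseudoGrad_mul_sub {μ : ℝ}
    (hmono : ∀ u v : Idx n → ℝ,
      μ * (∑ p : Idx n, (u p - v p) ^ 2) ≤ ∑ p : Idx n, (g p.1 u p.2 - g p.1 v p.2) * (u p - v p))
    (hℓ : 0 ≤ ℓ) (hqsum : ∑ i, q i = 1) (hNq : N * qmin ≤ 1)
    {u : Fin N → Idx n → ℝ} {m c : Idx n → ℝ}
    (hm : ∀ p, ∑ i, q i * u i p = m p) {a B : ℝ} (ha0 : 0 ≤ a) (hB0 : 0 ≤ B)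
    (ha : ∑ p, (m p - c p) ^ 2 = a ^ 2) (hB : weightedSqDist q u m ≤ B ^ 2) :
    μ * a ^ 2 - ℓ / qmin * B * (a + B) - ℓ / qmin * a * B ≤
      ∑ p : Idx n, (g p.1 (u p.1) p.2 - g p.1 c p.2) * (u p.1 p - c p) := by
  have hdist : weightedSqDist q u c ≤ (a + B) ^ 2 := by
    rw [weightedSqDist_eq_add hqsum hm c, ha]
    nlinarith
  have h1 : μ * a ^ 2 ≤ ∑ p : Idx n, (g p.1 m p.2 - g p.1 c p.2) * (m p - c p) :=
    ha ▸ hmono m c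
  have h2 := abs_sum_pseudoGrad_sub_mul_le hqmin0 hqmin hlip hℓ hB0 (by positivity) hB hdist
  have h3 := abs_sum_pseudoGrad_mean_sub_mul_le hqmin0 hqmin hlip hℓ hNq ha0 hB0 ha hB
  have hsplit : ∑ p : Idx n, (g p.1 (u p.1) p.2 - g p.1 c p.2) * (u p.1 p - c p) =
      ∑ p : Idx n, (g p.1 m p.2 - g p.1 c p.2) * (m p - c p) +
      ∑ p : Idx n, (g p.1 (u p.1) p.2 - g p.1 m p.2) * (u p.1 p - c p) +
      ∑ p : Idx n, (g p.1 m p.2 - g p.1 c p.2) * (u p.1 p - m p) := by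
    rw [← Finset.sum_add_distrib, ← Finset.sum_add_distrib]
    exact Finset.sum_congr rfl fun p _ => by ring
  rw [hsplit]
  linarith [(abs_le.1 h2).1, (abs_le.1 h3).1]

end Bounds

theorem weightedSqDist_step_le {W : Matrix (Fin N) (Fin N) ℝ} (hWrow : ∀ i, ∑ j, W i j = 1)
    {q : Fin N → ℝ} (hqpos : ∀ i, 0 < q i) (hqW : q ᵥ* W = q) (hqsum : ∑ i, q i = 1)
    {qmin : ℝ} (hqmin0 : 0 < qmin) (hqmin : ∀ i, qmin ≤ q i) (hNq : N * qmin ≤ 1)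
    {σ : ℝ} (hσ0 : 0 ≤ σ)
    (hmix : ∀ v : Fin N → ℝ, ∑ i, q i * v i = 0 →
      ∑ i, q i * (W *ᵥ v) i ^ 2 ≤ σ ^ 2 * ∑ i, q i * v i ^ 2)
    {Ω : (i : Fin N) → Set (Fin (n i) → ℝ)} (hΩ : ∀ i, Convex ℝ (Ω i))
    {g : (i : Fin N) → (Idx n → ℝ) → (Fin (n i) → ℝ)} {ℓ μ : ℝ} (hℓ : 0 ≤ ℓ)
    (hlip : ∀ x y : Fin N → Idx n → ℝ,
      ∑ p : Idx n, (g p.1 (x p.1) p.2 - g p.1 (y p.1) p.2) ^ 2 ≤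
        ℓ ^ 2 * ∑ i, ∑ p : Idx n, (x i p - y i p) ^ 2)
    (hmono : ∀ u v : Idx n → ℝ,
      μ * (∑ p : Idx n, (u p - v p) ^ 2) ≤ ∑ p : Idx n, (g p.1 u p.2 - g p.1 v p.2) * (u p - v p))
    {xstar : Idx n → ℝ} (hxstar : ∀ i, (fun a => xstar ⟨i, a⟩) ∈ Ω i)
    (hVI : ∀ i, ∀ z ∈ Ω i, 0 ≤ ∑ a, g i xstar a * (z a - xstar ⟨i, a⟩))
    {μbar ℓbar α ρ : ℝ} (hμbar : μbar * qmin ≤ μ) (hℓbar : ℓ / qmin = ℓbar) (hα : 0 ≤ α)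
    (hquad : ∀ a b : ℝ, (1 - 2 * α * μbar * qmin + α ^ 2 * ℓbar ^ 2) * a ^ 2
      + 2 * (2 * α * ℓbar * σ) * a * b
      + (1 + 2 * α * ℓbar + α ^ 2 * ℓbar ^ 2) * σ ^ 2 * b ^ 2 ≤ ρ * (a ^ 2 + b ^ 2))
    {x x' : Fin N → Idx n → ℝ}
    (hoff : ∀ i (p : Idx n), p.1 ≠ i → x' i p = ∑ j, W i j * x j p)
    (hproj : ∀ i, IsEuclProjOn (Ω i)
      (fun a => (∑ j, W i j * x j ⟨i, a⟩) - (α / q i) * g i (fun r => ∑ j, W i j * x j r) a)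
      (fun a => x' i ⟨i, a⟩)) :
    weightedSqDist q x' xstar ≤ ρ * weightedSqDist q x xstar := by
  subst hℓbar
  set u : Fin N → Idx n → ℝ := fun i p => ∑ j, W i j * x j p
  set m : Idx n → ℝ := fun p => ∑ i, q i * x i p
  have hm_u (p : Idx n) : ∑ i, q i * u i p = m p := sum_mul_mulVec_eq hqW fun j => x j p
  obtain ⟨a, ha0, ha⟩ : ∃ a : ℝ, 0 ≤ a ∧ ∑ p, (m p - xstar p) ^ 2 = a ^ 2 :=
    ⟨_, Real.sqrt_nonneg _, (Real.sq_sqrt (Finset.sum_nonneg fun _ _ => sq_nonneg _)).symm⟩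
  obtain ⟨b, hb0, hb⟩ : ∃ b : ℝ, 0 ≤ b ∧ weightedSqDist q x m = b ^ 2 :=
    ⟨_, Real.sqrt_nonneg _, (Real.sq_sqrt (weightedSqDist_nonneg (fun i => (hqpos i).le) _ _)).symm⟩
  have hB : weightedSqDist q u m ≤ (σ * b) ^ 2 := by
    rw [mul_pow, ← hb]
    exact weightedSqDist_mix_le hqsum hWrow hmix x
  have hEx : weightedSqDist q x xstar = b ^ 2 + a ^ 2 := by
    rw [weightedSqDist_eq_add hqsum (fun p => rfl), hb, ha]
  have hEu : weightedSqDist q u xstar ≤ (σ * b) ^ 2 + a ^ 2 := by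
    rw [weightedSqDist_eq_add hqsum hm_u, ha]
    linarith
  have hdesc := weightedSqDist_le_of_isEuclProjOn hqpos hqmin0 hqmin hΩ hxstar hVI hα
    (u := u) hoff hproj
  have hgrad := sum_sq_pseudoGrad_sub_le hqmin0 hqmin hlip u xstar
  have hinner := sub_le_sum_pseudoGrad_mul_sub hqmin0 hqmin hlip hmono hℓ hqsum hNq hm_u
    ha0 (mul_nonneg hσ0 hb0) ha hB
  have hgrad' := mul_le_mul_of_nonneg_left hgrad (by positivity : 0 ≤ α ^ 2 / qmin)
  have hEu' := mul_le_mul_of_nonneg_left hEu (by positivity : 0 ≤ 1 + α ^ 2 * (ℓ / qmin) ^ 2)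
  have hinner' := mul_le_mul_of_nonneg_left hinner (by positivity : 0 ≤ 2 * α)
  have hμbar' := mul_le_mul_of_nonneg_left hμbar (by positivity : 0 ≤ 2 * α * a ^ 2)
  -- the bounds combine to the quadratic form of `M_α` at `(a, b)`
  rw [hEx]
  linear_combination hdesc + hgrad' + hEu' + hinner' + hμbar' + hquad a b

end Game

lemma natCast_mul_ciInf_le_sum {N : ℕ} (q : Fin N → ℝ) : N * ⨅ i, q i ≤ ∑ i, q i := by
  simpa using Finset.sum_le_sum fun i (_ : i ∈ Finset.univ) =>
    ciInf_le (Set.finite_range q).bddBelow i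

lemma div_ciSup_mul_ciInf_le {ι : Type*} [Finite ι] [Nonempty ι] {q : ι → ℝ}
    (hq : ∀ i, 0 < q i) {μ : ℝ} (hμ : 0 ≤ μ) : μ / (⨆ i, q i) * ⨅ i, q i ≤ μ := by
  obtain ⟨i, hi⟩ := exists_eq_ciSup_of_finite (f := q)
  rw [← hi, div_mul_eq_mul_div, div_le_iff₀ (hq i)]
  exact mul_le_mul_of_nonneg_left (ciInf_le (Set.finite_range q).bddBelow i) hμ

lemma sqrt_le_sqrt_pow_mul {E : ℕ → ℝ} {ρ : ℝ} (hρ : 0 ≤ ρ) (h : ∀ k, E (k + 1) ≤ ρ * E k)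
    (k : ℕ) : √(E k) ≤ √ρ ^ k * √(E 0) :=
  le_geom (u := fun k => √(E k)) (Real.sqrt_nonneg ρ) k fun j _ => by
    rw [← Real.sqrt_mul hρ]
    exact Real.sqrt_le_sqrt (h j)

/-- Theorem 1: the fully-distributed fixed-step pseudo-gradient iteration
(Algorithm 1) converges to `1_N ⊗ x*` with linear rate `√ρ_α` in the `𝐐`-norm, provided the
step size `α` satisfies `ρ_α = λ_max(M_α) < 1`. -/
theorem stmt11
    (N : ℕ) (hN : 1 < N)
    (n : Fin N → ℕ)
    -- the communication matrix
    (W : Matrix (Fin N) (Fin N) ℝ)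
    (hWrow : ∀ i, ∑ j, W i j = 1)
    -- its left Perron-Frobenius eigenvector
    (q : Fin N → ℝ) (hqpos : ∀ i, 0 < q i)
    (hqW : Matrix.vecMul q W = q) (hqsum : ∑ i, q i = 1)
    (Q : Matrix (Fin N) (Fin N) ℝ) (hQ : Q = Matrix.diagonal q)
    (bQ : Matrix (Fin N × Idx n) (Fin N × Idx n) ℝ)
    (hbQ : bQ = Q ⊗ₖ (1 : Matrix (Idx n) (Idx n) ℝ))
    (σbar : ℝ)
    (hσbar : σbar = sortedSingVals
      (Matrix.diagonal (fun i => Real.sqrt (q i)) * W *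
        Matrix.diagonal (fun i => (Real.sqrt (q i))⁻¹)) ⟨N - 2, by omega⟩)
    -- the game: local feasible sets and partial gradients (continuous maps)
    (Ω : (i : Fin N) → Set (Fin (n i) → ℝ))
    (hΩconvex : ∀ i, Convex ℝ (Ω i))
    (g : (i : Fin N) → (Idx n → ℝ) → (Fin (n i) → ℝ))
    (ℓ μ : ℝ) (hℓ : 0 < ℓ) (hμ : 0 < μ)
    -- the extended pseudo-gradient 𝐅(x) = col(gᵢ(xᵢ)) is ℓ-Lipschitz (Euclidean norms)
    (hlip : ∀ x y : Fin N → Idx n → ℝ,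
      Real.sqrt (∑ p : Idx n, (g p.1 (x p.1) p.2 - g p.1 (y p.1) p.2) ^ 2) ≤
        ℓ * Real.sqrt (∑ i, ∑ p : Idx n, (x i p - y i p) ^ 2))
    -- the pseudo-gradient F(v) = 𝐅(1_N ⊗ v) is μ-strongly monotone
    (hmono : ∀ u v : Idx n → ℝ,
      μ * (∑ p : Idx n, (u p - v p) ^ 2) ≤
        ∑ p : Idx n, (g p.1 u p.2 - g p.1 v p.2) * (u p - v p))
    -- x* ∈ Ω solves the variational inequality ⟨F(x*), y - x*⟩ ≥ 0 ∀ y ∈ Ω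
    (xstar : Idx n → ℝ)
    (hxstarΩ : ∀ i, (fun a => xstar ⟨i, a⟩) ∈ Ω i)
    (hVI : ∀ y : Idx n → ℝ, (∀ i, (fun a => y ⟨i, a⟩) ∈ Ω i) →
      0 ≤ ∑ p : Idx n, g p.1 xstar p.2 * (y p - xstar p))
    -- the step size and the contraction constant ρ_α = λ_max(M_α) < 1
    (qmin μbar ℓbar : ℝ)
    (hqmin : qmin = ⨅ i, q i)
    (hμbar : μbar = μ / ⨆ i, q i)
    (hℓbar : ℓbar = ℓ / ⨅ i, q i)
    (α : ℝ) (hα : 0 < α)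
    (Mα : Matrix (Fin 2) (Fin 2) ℝ)
    (hMα : Mα = !![1 - 2 * α * μbar * qmin + α ^ 2 * ℓbar ^ 2, 2 * α * ℓbar * σbar;
                   2 * α * ℓbar * σbar, (1 + 2 * α * ℓbar + α ^ 2 * ℓbar ^ 2) * σbar ^ 2])
    (ρ : ℝ) (hρ : ρ = eigMax Mα) (hρ1 : ρ < 1)
    -- Algorithm 1
    (x : ℕ → Fin N → Idx n → ℝ)
    (hupd_off : ∀ (k : ℕ) (i : Fin N) (p : Idx n), p.1 ≠ i →
      x (k + 1) i p = ∑ j, W i j * x k j p)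
    (hupd_diag : ∀ (k : ℕ) (i : Fin N),
      IsEuclProjOn (Ω i)
        (fun a => (∑ j, W i j * x k j ⟨i, a⟩) -
          (α / q i) * g i (fun r => ∑ j, W i j * x k j r) a)
        (fun a => x (k + 1) i ⟨i, a⟩)) :
    ∀ k : ℕ,
      wnorm bQ (fun p : Fin N × Idx n => x k p.1 p.2 - xstar p.2) ≤
        (Real.sqrt ρ) ^ k * wnorm bQ (fun p : Fin N × Idx n => x 0 p.1 p.2 - xstar p.2) := by
  have : Nonempty (Fin N) := ⟨⟨0, by omega⟩⟩
  obtain ⟨imin, himin⟩ := exists_eq_ciInf_of_finite (f := q)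
  have hqmin0 : 0 < qmin := hqmin ▸ himin ▸ hqpos imin
  have hqmin_le (i : Fin N) : qmin ≤ q i := hqmin ▸ ciInf_le (Set.finite_range q).bddBelow i
  have hNq : N * qmin ≤ 1 := hqsum ▸ hqmin ▸ natCast_mul_ciInf_le_sum q
  have hμqmin : μbar * qmin ≤ μ := hμbar ▸ hqmin ▸ div_ciSup_mul_ciInf_le hqpos hμ.le
  have hℓqmin : ℓ / qmin = ℓbar := by rw [hℓbar, hqmin]
  have hquad (a b : ℝ) := quadForm_le_eigMax_fin_two
    (1 - 2 * α * μbar * qmin + α ^ 2 * ℓbar ^ 2) (2 * α * ℓbar * σbar)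
    ((1 + 2 * α * ℓbar + α ^ 2 * ℓbar ^ 2) * σbar ^ 2) a b
  simp only [← hMα, ← hρ] at hquad
  have hσρ : σbar ^ 2 ≤ ρ :=
    sq_le_of_forall_quadForm_le hα.le (hℓqmin ▸ div_nonneg hℓ.le hqmin0.le) hquad
  have hσ0 : 0 ≤ σbar := hσbar ▸ Real.sqrt_nonneg _
  have hmix (v : Fin N → ℝ) (hv : ∑ i, q i * v i = 0) :
      ∑ i, q i * (W *ᵥ v) i ^ 2 ≤ σbar ^ 2 * ∑ i, q i * v i ^ 2 :=
    hσbar ▸ sum_mul_mulVec_sq_le hN hqpos hqW hWrow (hσbar ▸ by nlinarith) hv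
  have hstep (k : ℕ) :=
    weightedSqDist_step_le hWrow hqpos hqW hqsum hqmin0 hqmin_le hNq hσ0 hmix hΩconvex hℓ.le
      (sum_sq_sub_le_of_sqrt_le hlip) hmono hxstarΩ (sum_block_mul_sub_nonneg hxstarΩ hVI)
      hμqmin hℓqmin hα.le hquad (hupd_off k) (hupd_diag k)
  intro k
  simp only [hbQ, hQ, wnorm_diagonal_kronecker_one]
  exact sqrt_le_sqrt_pow_mul (E := fun k => weightedSqDist q (x k) xstar)
    (hσρ.trans' (sq_nonneg _)) hstep k
end

section
/- Fix constants μ̄ > 0, ℓ̄ > 0, c > 0 and σ̄ ∈ [0,1), and for α ≥ 0 define the symmetric matrix M_α = [[1 − 2αμ̄c + α²ℓ̄², 2αℓ̄σ̄], [2αℓ̄σ̄, (1 + 2αℓ̄ + α²ℓ̄²)σ̄²]] and ρ_α = λ_max(M_α). Then √(ρ_α) = 1 − μ̄c·α + o(α) as α → 0⁺; that is, lim_{α→0⁺} (√(ρ_α) − 1)/α = −μ̄c. In particular, ρ_α < 1 for all sufficiently small α > 0, so the step-size condition λ_max(M_α) < 1 can always be satisfied. -/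
open Filter

/-! At `α = 0` the matrix `M_α` is `diag(1, σ̄²)` with a simple top eigenvalue `1`, so `λ_max(M_α)`
is differentiable at `0` with derivative the derivative `-2μ̄c` of the `(0,0)` entry (first-order
perturbation of a simple eigenvalue). Hence `√ρ_α` has derivative `-μ̄c` at `0`, which is the
expansion; a negative one-sided slope forces `ρ_α < 1` for small `α > 0`. -/

open Matrix

lemma isHermitian_fin_two_of (a b d : ℝ) : (!![a, b; b, d]).IsHermitian := by
  ext i j
  fin_cases i <;> fin_cases j <;> simp [conjTranspose]

lemma eigMax_fin_two_of (a b d : ℝ) :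
    eigMax !![a, b; b, d] = (a + d + Real.sqrt ((a - d) ^ 2 + 4 * b ^ 2)) / 2 := by
  have hH := isHermitian_fin_two_of a b d
  rw [eigMax, dif_pos hH]
  set e := hH.eigenvalues
  have hsum : e 0 + e 1 = a + d := by
    simpa [trace_fin_two_of, Fin.sum_univ_two] using hH.trace_eq_sum_eigenvalues.symm
  have hprod : e 0 * e 1 = a * d - b * b := by
    simpa [det_fin_two_of, Fin.prod_univ_two] using hH.det_eq_prod_eigenvalues.symm
  have hgap : Real.sqrt ((a - d) ^ 2 + 4 * b ^ 2) = |e 0 - e 1| := by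
    rw [← Real.sqrt_sq_eq_abs]
    congr 1
    linear_combination (-(a + d) - (e 0 + e 1)) * hsum + 4 * hprod
  have hsup : ⨆ i, e i = max (e 0) (e 1) := by
    apply le_antisymm
    · exact ciSup_le fun i => by fin_cases i <;> simp
    · exact max_le (le_ciSup (Set.finite_range e).bddAbove _)
        (le_ciSup (Set.finite_range e).bddAbove _)
  rw [hsup, hgap]
  rcases le_total (e 0) (e 1) with h | h
  · rw [max_eq_right h, abs_of_nonpos (by linarith)]; linarith
  · rw [max_eq_left h, abs_of_nonneg (by linarith)]; linarith

lemma hasDerivAt_eigMax_fin_two_of {a b d : ℝ → ℝ} {a' b' d' x : ℝ}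
    (ha : HasDerivAt a a' x) (hb : HasDerivAt b b' x) (hd : HasDerivAt d d' x)
    (hbx : b x = 0) (hgap : d x < a x) :
    HasDerivAt (fun t => eigMax !![a t, b t; b t, d t]) a' x := by
  simp only [eigMax_fin_two_of]
  have hsqrt : Real.sqrt ((a x - d x) ^ 2 + 4 * b x ^ 2) = a x - d x := by
    rw [hbx, zero_pow two_ne_zero, mul_zero, add_zero, Real.sqrt_sq (by linarith)]
  have hq : HasDerivAt (fun t => (a t - d t) ^ 2 + 4 * b t ^ 2)
      (2 * (a x - d x) * (a' - d')) x :=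
    (((ha.sub hd).pow 2).add ((hb.pow 2).const_mul 4)).congr_deriv (by simp [hbx])
  have hroot := hq.sqrt (by rw [hbx]; nlinarith)
  refine (((ha.add hd).add hroot).div_const 2).congr_deriv ?_
  rw [hsqrt]
  field_simp [(sub_pos.mpr hgap).ne']
  ring

lemma hasDerivAt_quadratic_zero (p q r : ℝ) :
    HasDerivAt (fun α => p + q * α + r * α ^ 2) q 0 :=
  ((((hasDerivAt_id 0).const_mul q).const_add p).add
    (((hasDerivAt_id 0).pow 2).const_mul r)).congr_deriv (by simp)

lemma tendsto_sqrt_sub_one_div_of_hasDerivAt {g : ℝ → ℝ} {g' : ℝ}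
    (hg : HasDerivAt g g' 0) (hg0 : g 0 = 1) :
    Tendsto (fun α => (Real.sqrt (g α) - 1) / α) (nhdsWithin 0 (Set.Ioi 0)) (nhds (g' / 2)) := by
  have hroot := hg.sqrt (by rw [hg0]; exact one_ne_zero)
  rw [hg0, Real.sqrt_one, mul_one] at hroot
  refine ((hasDerivAt_iff_tendsto_slope.mp hroot).mono_left
    (nhdsWithin_mono 0 fun _ hα => ne_of_gt hα)).congr fun α => ?_
  rw [slope_def_field, hg0, Real.sqrt_one, sub_zero]

lemma exists_lt_one_of_tendsto_sqrt_sub_one_div {g : ℝ → ℝ} {L : ℝ} (hL : L < 0)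
    (hg : Tendsto (fun α => (Real.sqrt (g α) - 1) / α) (nhdsWithin 0 (Set.Ioi 0)) (nhds L)) :
    ∃ αbar > (0 : ℝ), ∀ α : ℝ, 0 < α → α < αbar → g α < 1 := by
  obtain ⟨αbar, hαbar, hneg⟩ := mem_nhdsGT_iff_exists_Ioo_subset.mp (hg (Iio_mem_nhds hL))
  refine ⟨αbar, hαbar, fun α hα hαlt => ?_⟩
  have hslope : (Real.sqrt (g α) - 1) / α < 0 := hneg ⟨hα, hαlt⟩
  have hroot : Real.sqrt (g α) < 1 := by
    linarith [(div_lt_iff₀ hα).mp hslope]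
  simpa using (Real.sqrt_lt' one_pos).mp hroot

theorem stmt18_general
    (μbar ℓbar c σbar : ℝ)
    (hμbar : 0 < μbar) (hc : 0 < c)
    (hσnonneg : 0 ≤ σbar) (hσlt : σbar < 1)
    (ρ : ℝ → ℝ)
    (hρ : ∀ α : ℝ, ρ α = eigMax
      !![1 - 2 * α * μbar * c + α ^ 2 * ℓbar ^ 2, 2 * α * ℓbar * σbar;
         2 * α * ℓbar * σbar, (1 + 2 * α * ℓbar + α ^ 2 * ℓbar ^ 2) * σbar ^ 2]) :
    Tendsto (fun α : ℝ => (Real.sqrt (ρ α) - 1) / α)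
        (nhdsWithin 0 (Set.Ioi 0)) (nhds (-(μbar * c))) ∧
      ∃ αbar > (0 : ℝ), ∀ α : ℝ, 0 < α → α < αbar → ρ α < 1 := by
  have hσ : σbar ^ 2 < 1 := by nlinarith
  have hρ0 : ρ 0 = 1 := by
    rw [hρ, eigMax_fin_two_of]
    norm_num [Real.sqrt_sq (sub_nonneg.mpr hσ.le)]
  have hderiv : HasDerivAt ρ (-(2 * μbar * c)) 0 := by
    rw [funext hρ]
    refine hasDerivAt_eigMax_fin_two_of
      ((hasDerivAt_quadratic_zero 1 (-(2 * μbar * c)) (ℓbar ^ 2)).congr_of_eventuallyEq ?_)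
      ((hasDerivAt_quadratic_zero 0 (2 * ℓbar * σbar) 0).congr_of_eventuallyEq ?_)
      ((hasDerivAt_quadratic_zero (σbar ^ 2) (2 * ℓbar * σbar ^ 2)
        (ℓbar ^ 2 * σbar ^ 2)).congr_of_eventuallyEq ?_) (by simp) (by simpa using hσ)
    all_goals exact Eventually.of_forall fun α => by ring
  have hlim := tendsto_sqrt_sub_one_div_of_hasDerivAt hderiv hρ0
  rw [show -(2 * μbar * c) / 2 = -(μbar * c) by ring] at hlim
  exact ⟨hlim, exists_lt_one_of_tendsto_sqrt_sub_one_div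
    (neg_neg_of_pos (mul_pos hμbar hc)) hlim⟩

/-- with `ρ_α = λ_max(M_α)` for the 2×2 matrix `M_α` of Lemma 4, one has
the expansion `√(ρ_α) = 1 - μ̄ c α + o(α)` as `α → 0⁺`, i.e.
`(√(ρ_α) - 1)/α → -μ̄ c`; in particular `ρ_α < 1` for all sufficiently small `α > 0`. -/
theorem stmt18
    (μbar ℓbar c σbar : ℝ)
    (hμbar : 0 < μbar) (hℓbar : 0 < ℓbar) (hc : 0 < c)
    (hσnonneg : 0 ≤ σbar) (hσlt : σbar < 1)
    (ρ : ℝ → ℝ)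
    (hρ : ∀ α : ℝ, ρ α = eigMax
      !![1 - 2 * α * μbar * c + α ^ 2 * ℓbar ^ 2, 2 * α * ℓbar * σbar;
         2 * α * ℓbar * σbar, (1 + 2 * α * ℓbar + α ^ 2 * ℓbar ^ 2) * σbar ^ 2]) :
    Tendsto (fun α : ℝ => (Real.sqrt (ρ α) - 1) / α)
        (nhdsWithin 0 (Set.Ioi 0)) (nhds (-(μbar * c))) ∧
      ∃ αbar > (0 : ℝ), ∀ α : ℝ, 0 < α → α < αbar → ρ α < 1 :=
  stmt18_general μbar ℓbar c σbar hμbar hc hσnonneg hσlt ρ hρ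
end
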